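/- Every function f : ℕ^k → ℕ in the class FELEMENTARY (closed under composition and bounded recursion from 0, projections, successor, and E₂) satisfies: there exists m such that f(x⃗) ≤ E₂^m(max x⃗) for all x⃗, where E₂(0) = 2, E₂(x+1) = (E₂(x))² + 2, E₂^0(x) = x, E₂^{m+1}(x) = E₂(E₂^m(x)). -/
import Mathlib


/-- `E₂(0) = 2`, `E₂(x+1) = E₂(x)² + 2`. -/
def E2 : ℕ → ℕ
  | 0 => 2
  | x+1 => (E2 x)^2 + 2

/-- Iterates: `E₂⁰(x) = x`, `E₂^{m+1}(x) = E₂(E₂^m(x))`. -/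
def E2Iter : ℕ → ℕ → ℕ
  | 0, x => x
  | m+1, x => E2 (E2Iter m x)

/-- The class FELEMENTARY of elementary functions: smallest class containing
`0`, projections, successor and `E₂`, closed under composition and bounded
recursion. -/
inductive Felem : ∀ {k : ℕ}, ((Fin k → ℕ) → ℕ) → Prop
  | zero {k} : Felem (fun _ : Fin k → ℕ => 0)
  | proj {k} (i : Fin k) : Felem (fun x => x i)
  | succ : Felem (fun x : Fin 1 → ℕ => x 0 + 1)
  | e2 : Felem (fun x : Fin 1 → ℕ => E2 (x 0))
  | comp {k} (f : (Fin (k+1) → ℕ) → ℕ) (g : (Fin k → ℕ) → ℕ) :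
      Felem f → Felem g → Felem (fun x => f (Fin.snoc x (g x)))
  | brec {k} (g : (Fin k → ℕ) → ℕ) (h : (Fin (k+2) → ℕ) → ℕ)
      (j : (Fin (k+1) → ℕ) → ℕ) (f : (Fin (k+1) → ℕ) → ℕ) :
      Felem g → Felem h → Felem j →
      (∀ x, f (Fin.cons 0 x) = g x) →
      (∀ n x, f (Fin.cons (n+1) x) = h (Fin.snoc (Fin.cons n x) (f (Fin.cons n x)))) →
      (∀ z, f z ≤ j z) →
      Felem f

lemma E2_ge (x : ℕ) : x + 2 ≤ E2 x := by
  induction x with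
  | zero => simp [E2]
  | succ n ih =>
    have : n + 2 ≤ (E2 n)^2 := le_trans ih (Nat.le_self_pow two_ne_zero _)
    simp only [E2]; omega

lemma E2_mono : Monotone E2 := by
  apply monotone_nat_of_le_succ
  intro n
  have h := E2_ge n
  have : E2 n ≤ (E2 n)^2 := Nat.le_self_pow two_ne_zero _
  simp only [E2]; omega

lemma E2Iter_mono (m : ℕ) : Monotone (E2Iter m) := by
  induction m with
  | zero => exact monotone_id
  | succ n ih => exact fun a b hab => E2_mono (ih hab)

lemma le_E2Iter (m x : ℕ) : x ≤ E2Iter m x := by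
  induction m with
  | zero => rfl
  | succ n ih => exact le_trans ih (by have := E2_ge (E2Iter n x); simp only [E2Iter]; omega)

lemma E2Iter_add (m n x : ℕ) : E2Iter (m + n) x = E2Iter m (E2Iter n x) := by
  induction m with
  | zero => simp [E2Iter]
  | succ p ih => rw [Nat.add_right_comm]; simp only [E2Iter, ih]

theorem felem_bounded_by_E2Iter {k : ℕ} (f : (Fin k → ℕ) → ℕ) (hf : Felem f) :
    ∃ m : ℕ, ∀ x : Fin k → ℕ, f x ≤ E2Iter m (Finset.univ.sup x) := by
  induction hf with
  | zero => exact ⟨0, fun x => Nat.zero_le _⟩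
  | proj i => exact ⟨0, fun x => Finset.le_sup (Finset.mem_univ i)⟩
  | succ =>
    refine ⟨1, fun x => ?_⟩
    have h0 : x 0 ≤ Finset.univ.sup x := Finset.le_sup (Finset.mem_univ 0)
    have := E2_ge (Finset.univ.sup x)
    simpa only [E2Iter] using by omega
  | e2 =>
    refine ⟨1, fun x => ?_⟩
    exact E2_mono (Finset.le_sup (Finset.mem_univ 0))
  | comp f g _ _ ihf ihg =>
    obtain ⟨mf, hf⟩ := ihf
    obtain ⟨mg, hg⟩ := ihg
    refine ⟨mf + mg, fun x => ?_⟩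
    have hsup : Finset.univ.sup (Fin.snoc x (g x)) ≤ E2Iter mg (Finset.univ.sup x) := by
      apply Finset.sup_le
      intro i _
      refine Fin.lastCases ?_ ?_ i
      · simpa using hg x
      · intro j
        simp only [Fin.snoc_castSucc]
        exact le_trans (Finset.le_sup (Finset.mem_univ j)) (le_E2Iter _ _)
    calc f (Fin.snoc x (g x)) ≤ E2Iter mf (Finset.univ.sup (Fin.snoc x (g x))) := hf _
      _ ≤ E2Iter mf (E2Iter mg (Finset.univ.sup x)) := E2Iter_mono mf hsup
      _ = E2Iter (mf + mg) (Finset.univ.sup x) := (E2Iter_add mf mg _).symm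
  | brec g h j f _ _ _ _ _ hle ihg ihh ihj =>
    obtain ⟨mj, hj⟩ := ihj
    exact ⟨mj, fun x => le_trans (hle x) (hj x)⟩
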